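/- Let X be a δ-hyperbolic space with δ > 0, let p, q, x, y ∈ X, and fix a geodesic segment σ between p and q with d(p,q) > 12δ. Suppose p is a nearest point of σ to x (i.e., d(x,p) = min_{s ∈ σ} d(x,s)) and q is a nearest point of σ to y. Then every geodesic segment between x and y contains a point within distance 2δ of σ. -/

import Mathlib

/-- A geodesic segment between `a` and `b`: the image of an isometric embedding of the
real interval `[0, dist a b]` sending the endpoints to `a` and `b`. -/
def IsGeodesicSegment {X : Type*} [MetricSpace X] (a b : X) (s : Set X) : Prop :=
  ∃ f : ℝ → X, f 0 = a ∧ f (dist a b) = b ∧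
    (∀ u ∈ Set.Icc (0 : ℝ) (dist a b), ∀ v ∈ Set.Icc (0 : ℝ) (dist a b),
      dist (f u) (f v) = |u - v|) ∧
    s = f '' Set.Icc (0 : ℝ) (dist a b)

/-- A geodesic metric space: every pair of points is joined by a geodesic segment. -/
def GeodesicSpace (X : Type*) [MetricSpace X] : Prop :=
  ∀ a b : X, ∃ s : Set X, IsGeodesicSegment a b s

/-- A geodesic triangle with sides `s₁, s₂, s₃` is `δ`-thin if each side is contained in
the closed `δ`-neighborhood of the union of the other two sides. -/
def ThinTriangle {X : Type*} [MetricSpace X] (δ : ℝ) (s₁ s₂ s₃ : Set X) : Prop :=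
  (∀ p ∈ s₁, ∃ q ∈ s₂ ∪ s₃, dist p q ≤ δ) ∧
  (∀ p ∈ s₂, ∃ q ∈ s₁ ∪ s₃, dist p q ≤ δ) ∧
  (∀ p ∈ s₃, ∃ q ∈ s₁ ∪ s₂, dist p q ≤ δ)

/-- A `δ`-hyperbolic space: a geodesic metric space in which every geodesic triangle is
`δ`-thin. -/
def IsHyperbolicSpace (X : Type*) [MetricSpace X] (δ : ℝ) : Prop :=
  GeodesicSpace X ∧
  ∀ (x y z : X) (sxy sxz syz : Set X),
    IsGeodesicSegment x y sxy → IsGeodesicSegment x z sxz → IsGeodesicSegment y z syz →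
    ThinTriangle δ sxy sxz syz

/-!
Let `m` be the midpoint of `σ`, so `m` is farther than `6δ` from both `p` and `q`. If a point
`b` on a geodesic `[x, p]` is near `m`, then, as `p` is nearest to `x`, it is at least as near
to `p`; hence `p` is near `m`. Thinness of the triangle `x p q` therefore puts `m` within `δ` of
a point `b ∈ [x, q]`, and thinness of `x y q` puts `b` within `δ` of a point of `[x, y]`, the
alternative `[y, q]` being excluded by the same argument with `y, q` in place of `x, p`.
-/

namespace IsGeodesicSegment

variable {X : Type*} [MetricSpace X] {a b : X} {s : Set X}

theorem dist_add_dist_eq (hs : IsGeodesicSegment a b s) {c : X} (hc : c ∈ s) :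
    dist a c + dist c b = dist a b := by
  obtain ⟨f, hf0, hfd, hiso, rfl⟩ := hs
  obtain ⟨u, hu, rfl⟩ := hc
  have h0 : (0 : ℝ) ∈ Set.Icc 0 (dist a b) := ⟨le_rfl, dist_nonneg⟩
  have hd : dist a b ∈ Set.Icc 0 (dist a b) := ⟨dist_nonneg, le_rfl⟩
  have hau := hiso 0 h0 u hu
  have hub := hiso u hu (dist a b) hd
  rw [hf0] at hau
  rw [hfd] at hub
  rw [hau, hub, abs_of_nonpos (by linarith [hu.1]), abs_of_nonpos (by linarith [hu.2])]
  ring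

theorem exists_midpoint (hs : IsGeodesicSegment a b s) :
    ∃ m ∈ s, dist a m = dist a b / 2 ∧ dist m b = dist a b / 2 := by
  obtain ⟨f, hf0, hfd, hiso, hfs⟩ := hs
  have hd : (0 : ℝ) ≤ dist a b := dist_nonneg
  have hhalf : dist a b / 2 ∈ Set.Icc 0 (dist a b) := ⟨by linarith, by linarith⟩
  have hm : f (dist a b / 2) ∈ s := hfs ▸ Set.mem_image_of_mem f hhalf
  have ham : dist a (f (dist a b / 2)) = dist a b / 2 := by
    have := hiso 0 ⟨le_rfl, hd⟩ _ hhalf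
    rw [hf0, abs_of_nonpos (by linarith)] at this
    linarith
  refine ⟨_, hm, ham, ?_⟩
  linarith [dist_add_dist_eq ⟨f, hf0, hfd, hiso, hfs⟩ hm]

theorem dist_le_two_mul_of_dist_le (hs : IsGeodesicSegment a b s) {c m : X} (hc : c ∈ s)
    (hnear : dist a b ≤ dist a m) : dist b m ≤ 2 * dist c m := by
  have hcb : dist c b ≤ dist c m := by
    linarith [hs.dist_add_dist_eq hc, dist_triangle a c m]
  linarith [dist_triangle b c m, dist_comm b c]

end IsGeodesicSegment

theorem segment_lemma_general {X : Type*} [MetricSpace X] (δ : ℝ)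
    (hX : IsHyperbolicSpace X δ) (p q x y : X) (σ : Set X)
    (hσ : IsGeodesicSegment p q σ)
    (hpq : dist p q > 12 * δ)
    (hp : ∀ s ∈ σ, dist x p ≤ dist x s)
    (hq : ∀ s ∈ σ, dist y q ≤ dist y s) :
    ∀ τ : Set X, IsGeodesicSegment x y τ →
      ∃ w ∈ τ, ∃ s ∈ σ, dist w s ≤ 2 * δ := by
  intro τ hτ
  obtain ⟨hgeo, hthin⟩ := hX
  obtain ⟨m, hmσ, hpm, hmq⟩ := hσ.exists_midpoint
  obtain ⟨sxp, hsxp⟩ := hgeo x p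
  obtain ⟨sxq, hsxq⟩ := hgeo x q
  obtain ⟨syq, hsyq⟩ := hgeo y q
  obtain ⟨b, hb | hb, hmb⟩ := (hthin x p q sxp sxq σ hsxp hsxq hσ).2.2 m hmσ
  · have hpm_le := hsxp.dist_le_two_mul_of_dist_le hb (hp m hmσ)
    linarith [dist_comm m b, dist_nonneg (x := p) (y := q)]
  obtain ⟨c, hc | hc, hbc⟩ := (hthin x y q τ sxq syq hτ hsxq hsyq).2.1 b hb
  · refine ⟨c, hc, m, hmσ, ?_⟩
    linarith [dist_triangle c b m, dist_comm c b, dist_comm m b]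
  · have hqm_le := hsyq.dist_le_two_mul_of_dist_le hc (hq m hmσ)
    linarith [dist_triangle c b m, dist_comm c b, dist_comm m b, dist_comm m q,
      dist_nonneg (x := p) (y := q)]

/-- **Lemma (segments between projections).** In a `δ`-hyperbolic space, if `σ` is a
geodesic segment between `p` and `q` with `d(p,q) > 12δ`, and `p` (resp. `q`) is a
nearest point of `σ` to `x` (resp. to `y`), then every geodesic segment between `x` and
`y` contains a point within distance `2δ` of `σ`. -/
theorem segment_lemma {X : Type*} [MetricSpace X] (δ : ℝ) (hδ : 0 < δ)
    (hX : IsHyperbolicSpace X δ) (p q x y : X) (σ : Set X)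
    (hσ : IsGeodesicSegment p q σ)
    (hpq : dist p q > 12 * δ)
    (hp : ∀ s ∈ σ, dist x p ≤ dist x s)
    (hq : ∀ s ∈ σ, dist y q ≤ dist y s) :
    ∀ τ : Set X, IsGeodesicSegment x y τ →
      ∃ w ∈ τ, ∃ s ∈ σ, dist w s ≤ 2 * δ :=
  segment_lemma_general δ hX p q x y σ hσ hpq hp hq
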